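/- arXiv:1611.08328 — 4 statements merged into one kernel-verified Lean document; each statement's English description precedes it below -/
import Mathlib

section
/- (Lemma 1.3) Let Γ be a simple graph, let Y be a set of vertices of Γ (identified with the full subgraph it spans), and let φ : Y¹ → V(Γ) be an edge-preserving map. Suppose there exists an automorphism φ₀ ∈ Aut(Γ) with φ₀|_Y = φ|_Y. Then φ = φ₀|_{Y¹}; moreover, for any other automorphism ψ ∈ Aut(Γ) with ψ|_{Y¹} = φ, the automorphism φ₀⁻¹ ∘ ψ lies in the pointwise stabilizer stab(Y), i.e. φ₀ is unique up to stab(Y). -/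
/-- A vertex `v` is uniquely determined by a set of vertices `B` if `{v}` equals the
intersection of the links (neighbor sets) of the elements of `B`. -/
def uniquelyDetermined {V : Type*} (G : SimpleGraph V) (v : V) (B : Set V) : Prop :=
  ({v} : Set V) = ⋂ w ∈ B, G.neighborSet w

/-- The first rigid expansion of `Y`: `Y` together with all vertices uniquely
determined by some subset of `Y`. -/
def rigidExpansion {V : Type*} (G : SimpleGraph V) (Y : Set V) : Set V :=
  Y ∪ {v | ∃ B ⊆ Y, uniquelyDetermined G v B}

/-- Lemma 1.3: if `φ : Y¹ → V(Γ)` is edge-preserving and agrees on `Y` with an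
automorphism `φ₀`, then `φ = φ₀` on all of `Y¹`; moreover any automorphism `ψ`
restricting to `φ` on `Y¹` differs from `φ₀` by an element of the pointwise
stabilizer of `Y`. -/
theorem statement4 {V : Type*} (G : SimpleGraph V) (Y : Set V) (φ : V → V)
    (hedge : ∀ u ∈ rigidExpansion G Y, ∀ v ∈ rigidExpansion G Y,
      G.Adj u v → G.Adj (φ u) (φ v))
    (φ₀ : G ≃g G) (hagree : ∀ y ∈ Y, φ y = φ₀ y) :
    (∀ v ∈ rigidExpansion G Y, φ v = φ₀ v) ∧
      ∀ ψ : G ≃g G, (∀ v ∈ rigidExpansion G Y, ψ v = φ v) →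
        ∀ y ∈ Y, (φ₀.symm (ψ y) : V) = y := by
  have main : ∀ v ∈ rigidExpansion G Y, φ v = φ₀ v := by
    intro v hv
    rcases hv with hY | ⟨B, hBY, hud⟩
    · exact hagree v hY
    · have hvmem : ∀ w ∈ B, G.Adj w v := by
        intro w hw
        have hvmem' : v ∈ ⋂ w ∈ B, G.neighborSet w := by
          rw [← hud]; exact rfl
        exact Set.mem_iInter₂.1 hvmem' w hw
      have h2 : φ₀.symm (φ v) ∈ ⋂ w ∈ B, G.neighborSet w := by
        apply Set.mem_iInter₂.2
        intro w hw
        have hadj : G.Adj (φ w) (φ v) :=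
          hedge w (Or.inl (hBY hw)) v (Or.inr ⟨B, hBY, hud⟩) (hvmem w hw)
        rw [hagree w (hBY hw)] at hadj
        have h3 : G.Adj (φ₀.symm (φ₀ w)) (φ₀.symm (φ v)) := φ₀.symm.map_adj_iff.2 hadj
        simpa using h3
      rw [← hud] at h2
      have h4 : φ₀.symm (φ v) = v := h2
      calc φ v = φ₀ (φ₀.symm (φ v)) := (φ₀.apply_symm_apply _).symm
        _ = φ₀ v := by rw [h4]
  refine ⟨main, ?_⟩
  intro ψ hψ y hy
  have hyexp : y ∈ rigidExpansion G Y := Or.inl hy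
  rw [hψ y hyexp, main y hyexp]
  simp
end

section
/- (Theorem C) Let Γ be a connected simple graph, let Y be a connected set of vertices of Γ (identified with the full subgraph it spans), and let φ : Y^∞ → V(Γ) be an edge-preserving map, where Y^∞ = ⋃_{k ∈ ℕ} Yᵏ is the union of the iterated rigid expansions of Y. Suppose there exists an automorphism φ₀ ∈ Aut(Γ) with φ₀|_Y = φ|_Y. Then φ = φ₀|_{Y^∞}; moreover, any other automorphism ψ ∈ Aut(Γ) with ψ|_{Y^∞} = φ differs from φ₀ by an element of the pointwise stabilizer stab(Y), i.e. φ₀⁻¹ ∘ ψ ∈ stab(Y). -/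
/-- The iterated rigid expansions: `Y⁰ = Y` and `Yᵏ = (Yᵏ⁻¹)¹`. -/
def rigidExpansionIter {V : Type*} (G : SimpleGraph V) (Y : Set V) : ℕ → Set V
  | 0 => Y
  | k + 1 => rigidExpansion G (rigidExpansionIter G Y k)

/-- `Y^∞ = ⋃ₖ Yᵏ`, the union of all iterated rigid expansions. -/
def rigidExpansionInf {V : Type*} (G : SimpleGraph V) (Y : Set V) : Set V :=
  ⋃ k, rigidExpansionIter G Y k

/-- Theorem C: let `Γ` be a connected simple graph, `Y` a connected full subgraph and
`φ : Y^∞ → V(Γ)` an edge-preserving map agreeing on `Y` with an automorphism `φ₀`.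
Then `φ = φ₀` on `Y^∞`, and any other automorphism `ψ` restricting to `φ` on `Y^∞`
differs from `φ₀` by an element of the pointwise stabilizer of `Y`. -/
theorem statement5 {V : Type*} (G : SimpleGraph V) (hG : G.Connected)
    (Y : Set V) (hY : (G.induce Y).Connected)
    (φ : V → V)
    (hedge : ∀ u ∈ rigidExpansionInf G Y, ∀ v ∈ rigidExpansionInf G Y,
      G.Adj u v → G.Adj (φ u) (φ v))
    (φ₀ : G ≃g G) (hagree : ∀ y ∈ Y, φ y = φ₀ y) :
    (∀ v ∈ rigidExpansionInf G Y, φ v = φ₀ v) ∧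
      ∀ ψ : G ≃g G, (∀ v ∈ rigidExpansionInf G Y, ψ v = φ v) →
        ∀ y ∈ Y, (φ₀.symm (ψ y) : V) = y := by
  have hsub : ∀ k, rigidExpansionIter G Y k ⊆ rigidExpansionInf G Y :=
    fun k => Set.subset_iUnion (rigidExpansionIter G Y) k
  have hmain : ∀ k, ∀ v ∈ rigidExpansionIter G Y k, φ v = φ₀ v := by
    intro k
    induction k with
    | zero => exact hagree
    | succ n ih =>
      rintro v (hv | ⟨B, hB, hud⟩)
      · exact ih v hv
      · have hvinf : v ∈ rigidExpansionInf G Y :=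
          hsub (n + 1) (Or.inr ⟨B, hB, hud⟩)
        have hadj : ∀ w ∈ B, G.Adj w v := by
          intro w hw
          have hv' : v ∈ ⋂ w ∈ B, G.neighborSet w := by
            rw [← hud]; exact rfl
          exact Set.mem_iInter₂.mp hv' w hw
        have hkey : φ₀.symm (φ v) ∈ ({v} : Set V) := by
          rw [hud]
          refine Set.mem_iInter₂.mpr fun w hw => ?_
          have h1 : G.Adj (φ w) (φ v) :=
            hedge w (hsub n (hB hw)) v hvinf (hadj w hw)
          rw [ih w (hB hw)] at h1
          have h2 : G.Adj (φ₀.symm (φ₀ w)) (φ₀.symm (φ v)) := φ₀.symm.map_adj_iff.mpr h1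
          simpa using h2
        have : φ₀.symm (φ v) = v := hkey
        calc φ v = φ₀ (φ₀.symm (φ v)) := (φ₀.apply_symm_apply (φ v)).symm
          _ = φ₀ v := by rw [this]
  refine ⟨fun v hv => ?_, fun ψ hψ y hy => ?_⟩
  · obtain ⟨k, hk⟩ := Set.mem_iUnion.mp hv
    exact hmain k v hk
  · have h1 : ψ y = φ₀ y := by
      rw [hψ y (hsub 0 hy)]; exact hagree y hy
    rw [h1, φ₀.symm_apply_apply]
end

section
/- (Corollary D) Let Γ be a connected simple graph, let Y be a rigid set of vertices of Γ, and let φ : Y^∞ → V(Γ) be an edge-preserving map such that the restriction φ|_Y is locally injective. Then φ is the restriction to Y^∞ of an automorphism of Γ, and this automorphism is unique up to the pointwise stabilizer stab(Y): any two automorphisms of Γ restricting to φ on Y^∞ differ by an element of stab(Y). -/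
/-- A map is simplicial on `Y` if adjacent vertices of `Y` are mapped to adjacent or
equal vertices. -/
def IsSimplicialOn {V : Type*} (G : SimpleGraph V) (f : V → V) (Y : Set V) : Prop :=
  ∀ u ∈ Y, ∀ v ∈ Y, G.Adj u v → (G.Adj (f u) (f v) ∨ f u = f v)

/-- A map is locally injective on `Y` if for every `v ∈ Y` it is injective on
`({v} ∪ lk(v)) ∩ Y`. -/
def IsLocallyInjectiveOn {V : Type*} (G : SimpleGraph V) (f : V → V) (Y : Set V) : Prop :=
  ∀ v ∈ Y, Set.InjOn f (({v} ∪ G.neighborSet v) ∩ Y)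

/-- `Y` is a rigid set if every locally injective simplicial map from `Y` to `V(Γ)` is
the restriction to `Y` of an automorphism of `Γ`, unique up to the pointwise
stabilizer of `Y`. -/
def IsRigidSet {V : Type*} (G : SimpleGraph V) (Y : Set V) : Prop :=
  ∀ f : V → V, IsSimplicialOn G f Y → IsLocallyInjectiveOn G f Y →
    (∃ φ : G ≃g G, ∀ y ∈ Y, f y = φ y) ∧
      ∀ φ ψ : G ≃g G, (∀ y ∈ Y, f y = φ y) → (∀ y ∈ Y, f y = ψ y) →
        ∀ y ∈ Y, (φ.symm (ψ y) : V) = y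


lemma iter_subset_inf {V : Type*} (G : SimpleGraph V) (Y : Set V) (k : ℕ) :
    rigidExpansionIter G Y k ⊆ rigidExpansionInf G Y :=
  Set.subset_iUnion (rigidExpansionIter G Y) k

lemma Y_subset_inf {V : Type*} (G : SimpleGraph V) (Y : Set V) :
    Y ⊆ rigidExpansionInf G Y := iter_subset_inf G Y 0

lemma iso_image_neighborSet {V : Type*} {G : SimpleGraph V} (e : G ≃g G) (w : V) :
    (e : V → V) '' G.neighborSet w = G.neighborSet (e w) := by
  ext x
  constructor
  · rintro ⟨y, hy, rfl⟩
    exact e.map_adj_iff.mpr hy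
  · intro hx
    exact ⟨e.symm x, by
      have : G.Adj (e w) x := hx
      have := e.symm.map_adj_iff.mpr this
      simpa using this, by simp⟩

/-- Corollary D: if `Y` is a rigid set of a connected graph `Γ` and
`φ : Y^∞ → V(Γ)` is an edge-preserving map whose restriction to `Y` is locally
injective, then `φ` is the restriction to `Y^∞` of an automorphism of `Γ`, unique up
to the pointwise stabilizer of `Y`. -/
theorem statement6 {V : Type*} (G : SimpleGraph V) (hG : G.Connected)
    (Y : Set V) (hY : IsRigidSet G Y) (φ : V → V)
    (hedge : ∀ u ∈ rigidExpansionInf G Y, ∀ v ∈ rigidExpansionInf G Y,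
      G.Adj u v → G.Adj (φ u) (φ v))
    (hloc : IsLocallyInjectiveOn G φ Y) :
    (∃ φ₀ : G ≃g G, ∀ v ∈ rigidExpansionInf G Y, φ v = φ₀ v) ∧
      ∀ φ₀ ψ : G ≃g G, (∀ v ∈ rigidExpansionInf G Y, φ v = φ₀ v) →
        (∀ v ∈ rigidExpansionInf G Y, φ v = ψ v) →
        ∀ y ∈ Y, (φ₀.symm (ψ y) : V) = y := by
  have hsub : Y ⊆ rigidExpansionInf G Y := Y_subset_inf G Y
  have hsimp : IsSimplicialOn G φ Y := fun u hu v hv h =>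
    Or.inl (hedge u (hsub hu) v (hsub hv) h)
  obtain ⟨⟨φ₀, hφ₀⟩, huniq⟩ := hY φ hsimp hloc
  constructor
  · refine ⟨φ₀, ?_⟩
    have key : ∀ k, ∀ v ∈ rigidExpansionIter G Y k, φ v = φ₀ v := by
      intro k
      induction k with
      | zero => exact hφ₀
      | succ n ih =>
        intro v hv
        rcases hv with hv | ⟨B, hB, hud⟩
        · exact ih v hv
        · -- v is uniquely determined by B ⊆ Yⁿ
          have himg : ({(φ₀ v : V)} : Set V) = ⋂ w ∈ B, G.neighborSet (φ₀ w) := by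
            have := congrArg (fun S => (φ₀ : V → V) '' S) hud
            simp only [Set.image_singleton] at this
            rw [this, Set.image_iInter₂ (show Function.Bijective (φ₀ : V → V) from φ₀.toEquiv.bijective)]
            exact Set.iInter₂_congr fun w _ => iso_image_neighborSet φ₀ w
          have hmem : φ v ∈ ⋂ w ∈ B, G.neighborSet (φ₀ w) := by
            refine Set.mem_iInter₂.mpr fun w hw => ?_
            have hvw : v ∈ G.neighborSet w := by
              have : v ∈ ({v} : Set V) := rfl
              rw [hud] at this
              exact Set.mem_iInter₂.mp this w hw
            have hadj : G.Adj w v := hvw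
            have h1 : w ∈ rigidExpansionInf G Y := iter_subset_inf G Y n (hB hw)
            have h2 : v ∈ rigidExpansionInf G Y :=
              iter_subset_inf G Y (n+1) (Or.inr ⟨B, hB, hud⟩)
            have := hedge w h1 v h2 hadj
            rw [ih w (hB hw)] at this
            exact this
          rw [← himg] at hmem
          exact hmem
    intro v hv
    obtain ⟨k, hk⟩ := Set.mem_iUnion.mp hv
    exact key k v hk
  · intro φ₁ ψ h1 h2 y hy
    exact huniq φ₁ ψ (fun y hy => h1 y (hsub hy)) (fun y hy => h2 y (hsub hy)) y hy
end

section
/- (Corollary 1.5) Let Γ be a connected simple graph and let Y be a rigid set of vertices of Γ. Then Y^∞ = ⋃_{k ∈ ℕ} Yᵏ, the union of the iterated rigid expansions of Y, is also a rigid set of Γ: every locally injective simplicial map from Y^∞ to V(Γ) is the restriction to Y^∞ of an automorphism of Γ, unique up to the pointwise stabilizer stab(Y^∞). -/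
/-- Corollary 1.5: if `Y` is a rigid set of a connected graph `Γ`, then `Y^∞` is also
a rigid set of `Γ`. -/
theorem statement7 {V : Type*} (G : SimpleGraph V) (hG : G.Connected)
    (Y : Set V) (hY : IsRigidSet G Y) :
    IsRigidSet G (rigidExpansionInf G Y) := by
  intro f hs hli
  set Yinf := rigidExpansionInf G Y with hYinf
  have hYsub : ∀ k, rigidExpansionIter G Y k ⊆ Yinf := fun k => Set.subset_iUnion _ k
  have hY0 : Y ⊆ Yinf := hYsub 0
  have hsY : IsSimplicialOn G f Y := fun u hu v hv => hs u (hY0 hu) v (hY0 hv)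
  have hliY : IsLocallyInjectiveOn G f Y := fun v hv =>
    (hli v (hY0 hv)).mono (Set.inter_subset_inter_right _ hY0)
  obtain ⟨⟨φ, hφ⟩, _⟩ := hY f hsY hliY
  set g : V → V := fun v => φ.symm (f v) with hg
  have hinj : Function.Injective (fun v => (φ.symm v : V)) := fun a b h => by
    simpa using congrArg (fun x => (φ x : V)) h
  have hgs : IsSimplicialOn G g Yinf := by
    intro u hu v hv hadj
    rcases hs u hu v hv hadj with h | h
    · exact Or.inl (φ.symm.map_adj_iff.mpr h)
    · exact Or.inr (by simp [hg, h])
  have hgli : IsLocallyInjectiveOn G g Yinf := by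
    intro v hv x hx y hy hxy
    exact hli v hv hx hy (hinj hxy)
  have key : ∀ k, ∀ v ∈ rigidExpansionIter G Y k, g v = v := by
    intro k
    induction k with
    | zero =>
      intro v hv
      simp [hg, hφ v hv]
    | succ k ih =>
      intro v hv
      rcases hv with hv | ⟨B, hB, hud⟩
      · exact ih v hv
      · have hvk : v ∈ Yinf := hYsub (k+1) (Or.inr ⟨B, hB, hud⟩)
        have hmem : g v ∈ ⋂ w ∈ B, G.neighborSet w := by
          rw [Set.mem_iInter₂]
          intro w hw
          have hadj : G.Adj w v := by
            have hv' : v ∈ ⋂ w ∈ B, G.neighborSet w := by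
              rw [← hud]; exact rfl
            exact Set.mem_iInter₂.mp hv' w hw
          have hwinf : w ∈ Yinf := hYsub k (hB hw)
          have hgw : g w = w := ih w (hB hw)
          rcases hgs w hwinf v hvk hadj with h | h
          · rw [hgw] at h; exact h
          · exfalso
            have hvw : v = w :=
              hgli w hwinf ⟨Or.inr hadj, hvk⟩ ⟨Or.inl rfl, hwinf⟩ h.symm
            exact hadj.ne hvw.symm
        have : g v ∈ ({v} : Set V) := by rw [hud]; exact hmem
        exact this
  refine ⟨⟨φ, ?_⟩, ?_⟩
  · intro y hy
    obtain ⟨k, hk⟩ := Set.mem_iUnion.mp hy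
    have h := key k y hk
    have h2 := congrArg (fun x => (φ x : V)) h
    simpa [hg] using h2
  · intro φ' ψ hφ' hψ y hy
    have : (ψ y : V) = φ' y := by rw [← hψ y hy, hφ' y hy]
    rw [this]
    simp
end
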